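/- arXiv:2505.13946 — 2 statements merged into one kernel-verified Lean document; each statement's English description precedes it below -/
import Mathlib

section
/- With the setup of the previous identity (deterministic encoder f : 𝒳 → 𝒵, distributions P_X, Q_X with pushforwards P_Z, Q_Z, mixture conditionals M_{X|z}), the following inequality holds: √(2·D_JS(P_X || Q_X)) ≤ √(2·D_JS(P_Z || Q_Z)) + √( E_{z∼P_Z}[D_KL(P_{X|z} || M_{X|z})] + E_{z∼Q_Z}[D_KL(Q_{X|z} || M_{X|z})] ). -/
/-
For a deterministic encoder the chain rule for relative entropy is exact: conditioning on
`z = f x` splits `D_KL(P_X ‖ M_X)` into `D_KL(P_Z ‖ M_Z)` plus the average conditional divergence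
`E_{z∼P_Z}[D_KL(P_{X|z} ‖ M_{X|z})]`, because `P_X(x) = P_Z(f x) · P_{X|f x}(x)`. Doing this for
`P` and `Q` against their midpoint `M` gives `2 D_JS(P_X ‖ Q_X) = 2 D_JS(P_Z ‖ Q_Z) + Δ_{X|Z}`,
and the bound is the subadditivity of the square root.
-/

open Finset

noncomputable section

def KLdiv {α : Type*} [Fintype α] (p q : α → ℝ) : ℝ :=
  ∑ a, p a * Real.log (p a / q a)

def JSdiv {α : Type*} [Fintype α] (p q : α → ℝ) : ℝ :=
  (1 / 2) * KLdiv p (fun a => (p a + q a) / 2)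
    + (1 / 2) * KLdiv q (fun a => (p a + q a) / 2)

theorem Real.sqrt_add_le_add_sqrt (a b : ℝ) : √(a + b) ≤ √a + √b := by
  rw [Real.sqrt_le_left (by positivity)]
  nlinarith [Real.sq_sqrt' (x := a), Real.sq_sqrt' (x := b), le_max_left a 0, le_max_left b 0,
    mul_nonneg (Real.sqrt_nonneg a) (Real.sqrt_nonneg b)]

theorem Real.mul_log_div_eq_mul_log_div_add {a b A B : ℝ} (hb : b ≠ 0) (hA : A ≠ 0)
    (hB : B ≠ 0) :
    a * Real.log (a / b) = a * Real.log (A / B) + A * (a / A * Real.log (a / A / (b / B))) := by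
  rcases eq_or_ne a 0 with rfl | ha
  · simp
  rw [show a / b = A / B * (a / A / (b / B)) by field_simp,
    Real.log_mul (by positivity) (by positivity)]
  field_simp

section Pushforward

variable {α β : Type*} [Fintype α]

def pushforward [DecidableEq β] (f : α → β) (p : α → ℝ) (z : β) : ℝ :=
  ∑ x, if f x = z then p x else 0

def fiberCond [DecidableEq β] (f : α → β) (p : α → ℝ) (z : β) (x : α) : ℝ :=
  (if f x = z then p x else 0) / pushforward f p z

theorem sum_sum_eq_sum_of_eq_zero_off_graph [Fintype β] (f : α → β) (h : β → α → ℝ)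
    (hh : ∀ z x, f x ≠ z → h z x = 0) : ∑ z, ∑ x, h z x = ∑ x, h (f x) x := by
  rw [sum_comm]
  exact sum_congr rfl fun x _ => sum_eq_single (f x) (fun z _ hz => hh z x hz.symm) (by simp)

theorem sum_pushforward_mul [Fintype β] [DecidableEq β] (f : α → β) (p : α → ℝ) (g : β → ℝ) :
    ∑ z, pushforward f p z * g z = ∑ x, p x * g (f x) := by
  simp only [pushforward, sum_mul]
  rw [sum_sum_eq_sum_of_eq_zero_off_graph f]
  · simp
  · intro z x h
    simp [h]

theorem pushforward_ne_zero [DecidableEq β] (f : α → β) {p : α → ℝ} (hp : ∀ x, 0 ≤ p x)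
    {x : α} (hx : p x ≠ 0) : pushforward f p (f x) ≠ 0 := by
  have hle : p x ≤ pushforward f p (f x) := by
    simpa [pushforward] using single_le_sum (f := fun x' => if f x' = f x then p x' else 0)
      (fun x' _ => by split_ifs <;> simp [hp x']) (mem_univ x)
  exact (((hp x).lt_of_ne' hx).trans_le hle).ne'

theorem pushforward_midpoint [DecidableEq β] (f : α → β) (p q : α → ℝ) :
    pushforward f (fun x => (p x + q x) / 2)
      = fun z => (pushforward f p z + pushforward f q z) / 2 := by
  ext z
  simp only [pushforward, ← sum_add_distrib, sum_div]
  refine sum_congr rfl fun x _ => ?_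
  split_ifs <;> simp

theorem fiberCond_midpoint [DecidableEq β] (f : α → β) (p q : α → ℝ) (z : β) :
    fiberCond f (fun x => (p x + q x) / 2) z
      = fun x => ((if f x = z then p x else 0) + (if f x = z then q x else 0))
          / (pushforward f p z + pushforward f q z) := by
  ext x
  rw [fiberCond, pushforward_midpoint]
  split_ifs
  · exact div_div_div_cancel_right₀ two_ne_zero _ _
  · simp

theorem KLdiv_eq_KLdiv_pushforward_add [Fintype β] [DecidableEq β] (f : α → β) {p m : α → ℝ}
    (hp : ∀ x, 0 ≤ p x) (hm : ∀ x, 0 ≤ m x) (hpm : ∀ x, m x = 0 → p x = 0) :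
    KLdiv p m = KLdiv (pushforward f p) (pushforward f m)
      + ∑ z, pushforward f p z * KLdiv (fiberCond f p z) (fiberCond f m z) := by
  have hcond : ∑ z, pushforward f p z * KLdiv (fiberCond f p z) (fiberCond f m z)
      = ∑ x, pushforward f p (f x) * (fiberCond f p (f x) x
          * Real.log (fiberCond f p (f x) x / fiberCond f m (f x) x)) := by
    simp only [KLdiv, mul_sum]
    refine sum_sum_eq_sum_of_eq_zero_off_graph f _ fun z x h => ?_
    simp [fiberCond, h]
  rw [hcond, KLdiv, KLdiv, sum_pushforward_mul f p fun z =>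
    Real.log (pushforward f p z / pushforward f m z), ← sum_add_distrib]
  refine sum_congr rfl fun x _ => ?_
  rcases eq_or_ne (p x) 0 with hx | hx
  · simp [fiberCond, hx]
  have hmx : m x ≠ 0 := fun h => hx (hpm x h)
  simp only [fiberCond]
  exact Real.mul_log_div_eq_mul_log_div_add hmx (pushforward_ne_zero f hp hx)
    (pushforward_ne_zero f hm hmx)

def jsGap [Fintype β] [DecidableEq β] (f : α → β) (p q : α → ℝ) : ℝ :=
  ∑ z, pushforward f p z * KLdiv (fiberCond f p z) (fiberCond f (fun x => (p x + q x) / 2) z)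
    + ∑ z, pushforward f q z * KLdiv (fiberCond f q z) (fiberCond f (fun x => (p x + q x) / 2) z)

theorem two_mul_JSdiv_eq_add_jsGap [Fintype β] [DecidableEq β] (f : α → β) {p q : α → ℝ}
    (hp : ∀ x, 0 ≤ p x) (hq : ∀ x, 0 ≤ q x) :
    2 * JSdiv p q = 2 * JSdiv (pushforward f p) (pushforward f q) + jsGap f p q := by
  have hm : ∀ x, 0 ≤ (p x + q x) / 2 := fun x => by linarith [hp x, hq x]
  rw [JSdiv, JSdiv, jsGap,
    KLdiv_eq_KLdiv_pushforward_add f hp hm fun x h => by linarith [hp x, hq x],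
    KLdiv_eq_KLdiv_pushforward_add f hq hm fun x h => by linarith [hp x, hq x],
    pushforward_midpoint]
  ring

end Pushforward

theorem sqrt_js_input_le_sqrt_js_rep_add_sqrt_delta_general
    {𝒳 𝒵 : Type*} [Fintype 𝒳] [Fintype 𝒵] [DecidableEq 𝒵]
    (f : 𝒳 → 𝒵) (P Q : 𝒳 → ℝ)
    (hP0 : ∀ x, 0 ≤ P x)
    (hQ0 : ∀ x, 0 ≤ Q x) :
    Real.sqrt (2 * JSdiv P Q)
      ≤ Real.sqrt (2 * JSdiv (fun z => ∑ x, if f x = z then P x else 0)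
            (fun z => ∑ x, if f x = z then Q x else 0))
        + Real.sqrt
            ((∑ z, (∑ x, if f x = z then P x else 0) *
                 KLdiv
                   (fun x => (if f x = z then P x else 0)
                       / ∑ x', if f x' = z then P x' else 0)
                   (fun x => ((if f x = z then P x else 0) + (if f x = z then Q x else 0))
                       / ((∑ x', if f x' = z then P x' else 0)
                           + ∑ x', if f x' = z then Q x' else 0)))
              + ∑ z, (∑ x, if f x = z then Q x else 0) *
                 KLdiv
                   (fun x => (if f x = z then Q x else 0)
                       / ∑ x', if f x' = z then Q x' else 0)
                   (fun x => ((if f x = z then P x else 0) + (if f x = z then Q x else 0))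
                       / ((∑ x', if f x' = z then P x' else 0)
                           + ∑ x', if f x' = z then Q x' else 0))) := by
  have decomposition := two_mul_JSdiv_eq_add_jsGap f hP0 hQ0
  simp only [jsGap, fiberCond_midpoint] at decomposition
  rw [decomposition]
  exact Real.sqrt_add_le_add_sqrt _ _

/-- Representation-divergence bound (Lemma B.3): for a deterministic encoder
`f : 𝒳 → 𝒵`, distributions `P_X`, `Q_X` with pushforwards `P_Z`, `Q_Z`, and
mixture conditionals `M_{X|z} = (P_{X|z} + Q_{X|z})/2`,
`√(2·D_JS(P_X‖Q_X)) ≤ √(2·D_JS(P_Z‖Q_Z))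
  + √(E_{z∼P_Z}[D_KL(P_{X|z}‖M_{X|z})] + E_{z∼Q_Z}[D_KL(Q_{X|z}‖M_{X|z})])`. -/
theorem sqrt_js_input_le_sqrt_js_rep_add_sqrt_delta
    {𝒳 𝒵 : Type*} [Fintype 𝒳] [Fintype 𝒵] [DecidableEq 𝒵]
    (f : 𝒳 → 𝒵) (P Q : 𝒳 → ℝ)
    (hP0 : ∀ x, 0 ≤ P x) (hP1 : ∑ x, P x = 1)
    (hQ0 : ∀ x, 0 ≤ Q x) (hQ1 : ∑ x, Q x = 1) :
    Real.sqrt (2 * JSdiv P Q)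
      ≤ Real.sqrt (2 * JSdiv (fun z => ∑ x, if f x = z then P x else 0)
            (fun z => ∑ x, if f x = z then Q x else 0))
        + Real.sqrt
            ((∑ z, (∑ x, if f x = z then P x else 0) *
                 KLdiv
                   (fun x => (if f x = z then P x else 0)
                       / ∑ x', if f x' = z then P x' else 0)
                   (fun x => ((if f x = z then P x else 0) + (if f x = z then Q x else 0))
                       / ((∑ x', if f x' = z then P x' else 0)
                           + ∑ x', if f x' = z then Q x' else 0)))
              + ∑ z, (∑ x, if f x = z then Q x else 0) *
                 KLdiv
                   (fun x => (if f x = z then Q x else 0)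
                       / ∑ x', if f x' = z then Q x' else 0)
                   (fun x => ((if f x = z then P x else 0) + (if f x = z then Q x else 0))
                       / ((∑ x', if f x' = z then P x' else 0)
                           + ∑ x', if f x' = z then Q x' else 0))) :=
  sqrt_js_input_le_sqrt_js_rep_add_sqrt_delta_general f P Q hP0 hQ0
end
end

section
/- Let P and Q be distributions on a finite product space 𝒵_v × 𝒵_t such that P and Q have identical conditionals in both directions: P_{Z_v|z_t} = Q_{Z_v|z_t} for all z_t and P_{Z_t|z_v} = Q_{Z_t|z_v} for all z_v (wherever defined, with M = (P+Q)/2). Then 2·D_JS(P_{Z_v Z_t} || Q_{Z_v Z_t}) = D_JS(P_{Z_v} || Q_{Z_v}) + D_JS(P_{Z_t} || Q_{Z_t}). -/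
/-!
When `P` and `Q` have the same conditional law of `Z_t` given `Z_v`, so does their mixture
`M = (P + Q)/2`, and the conditional term of the KL chain rule vanishes:
`D_KL(P ‖ M) = D_KL(P_{Z_v} ‖ M_{Z_v})`, and likewise for `Q`. Hence `D_JS(P ‖ Q)` equals the
Jensen–Shannon divergence of the `Z_v`-marginals, and by symmetry also that of the
`Z_t`-marginals.
-/

open Finset

noncomputable section

section

variable {α β : Type*} [Fintype α] [Fintype β]

theorem KLdiv_comp_equiv (e : α ≃ β) (p q : β → ℝ) : KLdiv (p ∘ e) (q ∘ e) = KLdiv p q :=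
  e.sum_comp fun b => p b * Real.log (p b / q b)

theorem JSdiv_comp_equiv (e : α ≃ β) (p q : β → ℝ) : JSdiv (p ∘ e) (q ∘ e) = JSdiv p q :=
  congrArg₂ (fun x y => 1 / 2 * x + 1 / 2 * y)
    (KLdiv_comp_equiv e p fun b => (p b + q b) / 2)
    (KLdiv_comp_equiv e q fun b => (p b + q b) / 2)

/-- `hcond` says that `p` and `m` have the same conditional of the second coordinate given the
first, cross-multiplied so that it makes sense where a marginal vanishes. -/
theorem KLdiv_eq_KLdiv_fst_of_cond (p m : α × β → ℝ) (hp : ∀ x, 0 ≤ p x)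
    (hcond : ∀ a b, p (a, b) * ∑ b', m (a, b') = m (a, b) * ∑ b', p (a, b')) :
    KLdiv p m = KLdiv (fun a => ∑ b, p (a, b)) (fun a => ∑ b, m (a, b)) := by
  unfold KLdiv
  rw [Fintype.sum_prod_type]
  refine sum_congr rfl fun a _ => ?_
  rw [sum_mul]
  refine sum_congr rfl fun b _ => ?_
  rcases (hp (a, b)).eq_or_lt with hzero | hpos
  · simp [← hzero]
  have hmarg : 0 < ∑ b', p (a, b') :=
    hpos.trans_le (single_le_sum (fun b' _ => hp (a, b')) (mem_univ b))
  have hm : m (a, b) = p (a, b) * (∑ b', m (a, b')) / ∑ b', p (a, b') := by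
    rw [hcond, mul_div_cancel_right₀ _ hmarg.ne']
  -- no positivity of `m` is needed: if its marginal vanishes, both ratios are `x / 0 = 0`
  rw [hm, div_div_eq_mul_div, mul_div_mul_left _ _ hpos.ne']

theorem JSdiv_eq_JSdiv_fst_of_cond (p q : α × β → ℝ) (hp : ∀ x, 0 ≤ p x) (hq : ∀ x, 0 ≤ q x)
    (hcond : ∀ a b, p (a, b) * ∑ b', q (a, b') = q (a, b) * ∑ b', p (a, b')) :
    JSdiv p q = JSdiv (fun a => ∑ b, p (a, b)) (fun a => ∑ b, q (a, b)) := by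
  have hmid : ∀ a, ∑ b, (p (a, b) + q (a, b)) / 2 = ((∑ b, p (a, b)) + ∑ b, q (a, b)) / 2 :=
    fun a => by rw [← sum_div, sum_add_distrib]
  unfold JSdiv
  rw [KLdiv_eq_KLdiv_fst_of_cond p _ hp fun a b => by
      rw [hmid]; linear_combination hcond a b / 2,
    KLdiv_eq_KLdiv_fst_of_cond q _ hq fun a b => by
      rw [hmid]; linear_combination -hcond a b / 2]
  simp only [hmid]

theorem JSdiv_eq_JSdiv_snd_of_cond (p q : α × β → ℝ) (hp : ∀ x, 0 ≤ p x) (hq : ∀ x, 0 ≤ q x)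
    (hcond : ∀ a b, p (a, b) * ∑ a', q (a', b) = q (a, b) * ∑ a', p (a', b)) :
    JSdiv p q = JSdiv (fun b => ∑ a, p (a, b)) (fun b => ∑ a, q (a, b)) := by
  rw [← JSdiv_comp_equiv (Equiv.prodComm β α) p q]
  exact JSdiv_eq_JSdiv_fst_of_cond _ _ (fun _ => hp _) (fun _ => hq _) fun b a => hcond a b

end

theorem two_js_joint_eq_js_marginals_general
    {𝒵v 𝒵t : Type*} [Fintype 𝒵v] [Fintype 𝒵t]
    (P Q : 𝒵v × 𝒵t → ℝ)
    (hP0 : ∀ a, 0 ≤ P a)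
    (hQ0 : ∀ a, 0 ≤ Q a)
    (hcondv : ∀ zv zt,
        P (zv, zt) * (∑ zv', Q (zv', zt)) = Q (zv, zt) * ∑ zv', P (zv', zt))
    (hcondt : ∀ zv zt,
        P (zv, zt) * (∑ zt', Q (zv, zt')) = Q (zv, zt) * ∑ zt', P (zv, zt')) :
    2 * JSdiv P Q
      = JSdiv (fun zv => ∑ zt, P (zv, zt)) (fun zv => ∑ zt, Q (zv, zt))
        + JSdiv (fun zt => ∑ zv, P (zv, zt)) (fun zt => ∑ zv, Q (zv, zt)) := by
  rw [← JSdiv_eq_JSdiv_fst_of_cond P Q hP0 hQ0 hcondt,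
    ← JSdiv_eq_JSdiv_snd_of_cond P Q hP0 hQ0 hcondv, two_mul]

/-- Bimodal JSD decomposition (Eq. B.4 of the paper): if `P` and `Q` on
`𝒵_v × 𝒵_t` have identical conditionals in both directions
(`P_{Z_v|z_t} = Q_{Z_v|z_t}` and `P_{Z_t|z_v} = Q_{Z_t|z_v}` wherever
defined, expressed in cross-multiplied form), then
`2·D_JS(P ‖ Q) = D_JS(P_{Z_v} ‖ Q_{Z_v}) + D_JS(P_{Z_t} ‖ Q_{Z_t})`. -/
theorem two_js_joint_eq_js_marginals
    {𝒵v 𝒵t : Type*} [Fintype 𝒵v] [Fintype 𝒵t]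
    (P Q : 𝒵v × 𝒵t → ℝ)
    (hP0 : ∀ a, 0 ≤ P a) (hP1 : ∑ a, P a = 1)
    (hQ0 : ∀ a, 0 ≤ Q a) (hQ1 : ∑ a, Q a = 1)
    (hcondv : ∀ zv zt,
        P (zv, zt) * (∑ zv', Q (zv', zt)) = Q (zv, zt) * ∑ zv', P (zv', zt))
    (hcondt : ∀ zv zt,
        P (zv, zt) * (∑ zt', Q (zv, zt')) = Q (zv, zt) * ∑ zt', P (zv, zt')) :
    2 * JSdiv P Q
      = JSdiv (fun zv => ∑ zt, P (zv, zt)) (fun zv => ∑ zt, Q (zv, zt))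
        + JSdiv (fun zt => ∑ zv, P (zv, zt)) (fun zt => ∑ zv, Q (zv, zt)) :=
  two_js_joint_eq_js_marginals_general P Q hP0 hQ0 hcondv hcondt
end
end
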